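/- arXiv:1406.3933 — 3 statements merged into one kernel-verified Lean document; each statement's English description precedes it below -/
import Mathlib

section
/- The centered indicator random variable ξ_p with P(ξ_p = 1-p) = p and P(ξ_p = -p) = 1-p, for p ∈ (0,1), p ≠ 1/2, has subgaussian norm ‖ξ_p‖_Sub = sqrt((1-2p)/(2 ln((1-p)/p))). -/
/-!
Put `θ = artanh (1 - 2p)`, so that `(1 - p) / p = e^{2θ}` and
`E exp(λξ) = exp(λ tanh θ / 2) · cosh (λ/2 - θ) / cosh θ`. The bound
`E exp(λξ) ≤ exp(λ² tanh θ / (8θ))` is then the tangent-line inequality at `θ²` of the concave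
function `s ↦ log cosh √s`, whose derivative `tanh √s / (2√s)` decreases. The tangent line touches
at `λ = 4θ`, so `tanh θ / (4θ) = (1 - 2p) / (2 log ((1 - p) / p))` is the least admissible `τ²`.
-/

open MeasureTheory Real

/-- The subgaussian norm of a random variable `ξ`. -/
noncomputable def subgNorm {Ω : Type*} [MeasurableSpace Ω] (μ : Measure Ω) (ξ : Ω → ℝ) : ℝ :=
  sInf {τ : ℝ | 0 ≤ τ ∧ ∀ l : ℝ, ∫ ω, Real.exp (l * ξ ω) ∂μ ≤ Real.exp (l ^ 2 * τ ^ 2 / 2)}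

open Set

theorem ConcaveOn.le_add_mul_sub_of_hasDerivAt {S : Set ℝ} {f : ℝ → ℝ} {x y f' : ℝ}
    (hf : ConcaveOn ℝ S f) (hx : x ∈ S) (hy : y ∈ S) (hf' : HasDerivAt f f' x) :
    f y ≤ f x + f' * (y - x) := by
  rcases lt_trichotomy y x with hyx | rfl | hxy
  · have := hf.le_slope_of_hasDerivAt hy hx hyx hf'
    rw [slope_def_field, le_div_iff₀ (sub_pos.2 hyx)] at this
    linarith
  · simp
  · have := hf.slope_le_of_hasDerivAt hx hy hxy hf'
    rw [slope_def_field, div_le_iff₀ (sub_pos.2 hxy)] at this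
    linarith

namespace Real

theorem hasDerivAt_tanh (x : ℝ) : HasDerivAt tanh (1 / cosh x ^ 2) x := by
  have h := (hasDerivAt_sinh x).div (hasDerivAt_cosh x) (cosh_pos x).ne'
  rw [← sq, ← sq, cosh_sq_sub_sinh_sq] at h
  exact funext tanh_eq_sinh_div_cosh ▸ h

theorem antitoneOn_tanh_div_self : AntitoneOn (fun t => tanh t / t) (Ioi 0) := by
  have hderiv : ∀ t ≠ 0, HasDerivAt (fun t => tanh t / t)
      ((t - sinh t * cosh t) / (t ^ 2 * cosh t ^ 2)) t := by
    intro t ht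
    refine ((hasDerivAt_tanh t).div (hasDerivAt_id t) ht).congr_deriv ?_
    rw [tanh_eq_sinh_div_cosh, id]
    field_simp
  apply antitoneOn_of_deriv_nonpos (convex_Ioi 0)
  · exact fun t ht => (hderiv t ht.ne').continuousAt.continuousWithinAt
  · rw [interior_Ioi]
    exact fun t ht => (hderiv t ht.ne').differentiableAt.differentiableWithinAt
  · rw [interior_Ioi]
    intro t ht
    rw [(hderiv t ht.ne').deriv]
    have hsinh : 2 * t < 2 * sinh t * cosh t := by
      rw [← sinh_two_mul]
      exact self_lt_sinh_iff.2 (by linarith [mem_Ioi.1 ht])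
    exact div_nonpos_of_nonpos_of_nonneg (by linarith) (by positivity)

theorem hasDerivAt_log_cosh_sqrt {s : ℝ} (hs : 0 < s) :
    HasDerivAt (fun s => log (cosh √s)) (tanh √s / √s / 2) s := by
  refine ((hasDerivAt_sqrt hs.ne').cosh.log (cosh_pos _).ne').congr_deriv ?_
  rw [tanh_eq_sinh_div_cosh]
  field_simp

theorem concaveOn_log_cosh_sqrt : ConcaveOn ℝ (Ici 0) (fun s => log (cosh √s)) := by
  apply AntitoneOn.concaveOn_of_deriv (convex_Ici 0)
  · exact ((continuous_cosh.comp continuous_sqrt).log fun s => (cosh_pos _).ne').continuousOn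
  · rw [interior_Ici]
    exact fun s hs => (hasDerivAt_log_cosh_sqrt hs).differentiableAt.differentiableWithinAt
  · rw [interior_Ici]
    intro s hs t ht hst
    rw [(hasDerivAt_log_cosh_sqrt hs).deriv, (hasDerivAt_log_cosh_sqrt ht).deriv]
    exact div_le_div_of_nonneg_right
      (antitoneOn_tanh_div_self (sqrt_pos.2 hs) (sqrt_pos.2 ht) (sqrt_le_sqrt hst)) zero_le_two

theorem tanh_abs_div_abs (θ : ℝ) : tanh |θ| / |θ| = tanh θ / θ := by
  rcases abs_choice θ with h | h <;> rw [h]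
  rw [tanh_neg, neg_div_neg_eq]

theorem exp_two_mul_artanh {x : ℝ} (hx : x ∈ Ioo (-1) 1) :
    exp (2 * artanh x) = (1 + x) / (1 - x) := by
  rw [mul_comm, exp_mul, exp_artanh hx, rpow_two,
    sq_sqrt (div_nonneg (by linarith [hx.1]) (by linarith [hx.2]))]

theorem artanh_ne_zero {x : ℝ} (hx : x ∈ Ioo (-1) 1) (hx0 : x ≠ 0) : artanh x ≠ 0 := by
  rw [Ne, artanh_eq_zero_iff]
  grind

theorem div_artanh_nonneg (x : ℝ) : 0 ≤ x / artanh x := by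
  rcases le_total 0 x with hx | hx
  · exact div_nonneg hx (artanh_nonneg hx)
  · exact div_nonneg_of_nonpos hx (artanh_nonpos hx)

theorem log_cosh_le {θ : ℝ} (hθ : θ ≠ 0) (u : ℝ) :
    log (cosh u) ≤ log (cosh θ) + tanh θ / (2 * θ) * (u ^ 2 - θ ^ 2) := by
  have h := concaveOn_log_cosh_sqrt.le_add_mul_sub_of_hasDerivAt (sq_nonneg θ) (sq_nonneg u)
    (hasDerivAt_log_cosh_sqrt (pow_pos (abs_pos.2 hθ) 2 |>.trans_eq (sq_abs θ)))
  simp only [sqrt_sq_eq_abs, cosh_abs, tanh_abs_div_abs] at h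
  convert h using 2
  ring

end Real

theorem one_sub_two_mul_mem_Ioo {p : ℝ} (hp : p ∈ Ioo 0 1) : 1 - 2 * p ∈ Ioo (-1) 1 :=
  ⟨by linarith [hp.2], by linarith [hp.1]⟩

theorem exp_two_mul_artanh_one_sub_two_mul {p : ℝ} (hp : p ∈ Ioo 0 1) :
    exp (2 * artanh (1 - 2 * p)) = (1 - p) / p := by
  rw [exp_two_mul_artanh (one_sub_two_mul_mem_Ioo hp)]
  field_simp
  ring

noncomputable def centeredBernoulliMGF (p l : ℝ) : ℝ :=
  p * exp (l * (1 - p)) + (1 - p) * exp (l * -p)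

theorem centeredBernoulliMGF_eq_cosh {p : ℝ} (hp : p ∈ Ioo 0 1) (l : ℝ) :
    centeredBernoulliMGF p l =
      exp (l * (1 - 2 * p) / 2) *
        (cosh (l / 2 - artanh (1 - 2 * p)) / cosh (artanh (1 - 2 * p))) := by
  have hE := exp_two_mul_artanh_one_sub_two_mul hp
  set θ := artanh (1 - 2 * p)
  rw [two_mul, exp_add, eq_div_iff hp.1.ne'] at hE
  have h₁ : exp (l * (1 - p)) = exp (l * (1 - 2 * p) / 2) * exp (l / 2) := by
    rw [← exp_add]; ring_nf
  have h₂ : exp (l * -p) = exp (l * (1 - 2 * p) / 2) / exp (l / 2) := by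
    rw [← exp_sub]; ring_nf
  rw [centeredBernoulliMGF, h₁, h₂, cosh_eq, cosh_eq, exp_neg, exp_neg, exp_sub]
  field_simp
  linear_combination (exp (l / 2) ^ 2 - 1) * hE

theorem centeredBernoulliMGF_le {p : ℝ} (hp : p ∈ Ioo 0 1) (hp2 : p ≠ 1 / 2) (l : ℝ) :
    centeredBernoulliMGF p l ≤
      exp (l ^ 2 * ((1 - 2 * p) / (4 * artanh (1 - 2 * p))) / 2) := by
  have hθ := artanh_ne_zero (one_sub_two_mul_mem_Ioo hp) (by grind)
  have htanh := tanh_artanh (one_sub_two_mul_mem_Ioo hp)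
  rw [centeredBernoulliMGF_eq_cosh hp]
  set θ := artanh (1 - 2 * p)
  have hcosh := log_cosh_le hθ (l / 2 - θ)
  calc _ = exp (l * (1 - 2 * p) / 2 + (log (cosh (l / 2 - θ)) - log (cosh θ))) := by
        rw [exp_add, exp_sub, exp_log (cosh_pos _), exp_log (cosh_pos _)]
    _ ≤ exp (l * (1 - 2 * p) / 2 + tanh θ / (2 * θ) * ((l / 2 - θ) ^ 2 - θ ^ 2)) := by
        gcongr; linarith
    _ = _ := by
        rw [htanh]; congr 1; field_simp; ring

theorem centeredBernoulliMGF_four_mul_artanh {p : ℝ} (hp : p ∈ Ioo 0 1) (hp2 : p ≠ 1 / 2) :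
    centeredBernoulliMGF p (4 * artanh (1 - 2 * p)) =
      exp ((4 * artanh (1 - 2 * p)) ^ 2 * ((1 - 2 * p) / (4 * artanh (1 - 2 * p))) / 2) := by
  have hθ := artanh_ne_zero (one_sub_two_mul_mem_Ioo hp) (by grind)
  rw [centeredBernoulliMGF_eq_cosh hp]
  set θ := artanh (1 - 2 * p)
  rw [show 4 * θ / 2 - θ = θ by ring, div_self (cosh_pos θ).ne', mul_one]
  congr 1
  field_simp

theorem subgNorm_eq_of_forall_le_of_eq {Ω : Type*} [MeasurableSpace Ω] {μ : Measure Ω}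
    {ξ : Ω → ℝ} {σ l₀ : ℝ} (hσ : 0 ≤ σ)
    (hle : ∀ l, ∫ ω, exp (l * ξ ω) ∂μ ≤ exp (l ^ 2 * σ ^ 2 / 2)) (hl₀ : l₀ ≠ 0)
    (heq : ∫ ω, exp (l₀ * ξ ω) ∂μ = exp (l₀ ^ 2 * σ ^ 2 / 2)) :
    subgNorm μ ξ = σ := by
  refine IsLeast.csInf_eq ⟨⟨hσ, hle⟩, fun τ ⟨hτ, hτle⟩ => ?_⟩
  have hexp := exp_le_exp.1 (heq ▸ hτle l₀)
  have hl₀sq : 0 < l₀ ^ 2 := pow_pos (abs_pos.2 hl₀) 2 |>.trans_eq (sq_abs l₀)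
  have hsq : σ ^ 2 ≤ τ ^ 2 := by nlinarith
  exact (pow_le_pow_iff_left₀ hσ hτ two_ne_zero).1 hsq

theorem integral_comp_of_two_point {Ω : Type*} [MeasurableSpace Ω] {μ : Measure Ω}
    [IsProbabilityMeasure μ] {ξ : Ω → ℝ} (hξ : Measurable ξ) {a b p : ℝ} (hab : a ≠ b)
    (hp : p ∈ Icc 0 1) (ha : μ {ω | ξ ω = a} = ENNReal.ofReal p)
    (hb : μ {ω | ξ ω = b} = ENNReal.ofReal (1 - p)) (f : ℝ → ℝ) :
    ∫ ω, f (ξ ω) ∂μ = p * f a + (1 - p) * f b := by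
  set A := {ω | ξ ω = a}
  set B := {ω | ξ ω = b}
  have hA : MeasurableSet A := hξ (measurableSet_singleton a)
  have hB : MeasurableSet B := hξ (measurableSet_singleton b)
  have hAB : Disjoint A B :=
    disjoint_left.2 fun ω (hωa : ξ ω = a) (hωb : ξ ω = b) => hab (hωa ▸ hωb)
  have hae : ∀ᵐ ω ∂μ, ω ∈ A ∪ B := by
    refine ae_iff.2 ((prob_compl_eq_zero_iff (hA.union hB)).2 ?_)
    rw [measure_union hAB hB, ha, hb, ← ENNReal.ofReal_add hp.1 (by linarith [hp.2])]
    simp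
  have hf : (fun ω => f (ξ ω)) =ᵐ[μ]
      A.indicator (fun _ => f a) + B.indicator (fun _ => f b) := by
    filter_upwards [hae] with ω hω
    rcases hω with hωa | hωb
    · simp [hωa, indicator_of_notMem (disjoint_left.1 hAB hωa), hωa.out]
    · simp [hωb, indicator_of_notMem (disjoint_right.1 hAB hωb), hωb.out]
  rw [integral_congr_ae hf, integral_add' ((integrable_const _).indicator hA)
    ((integrable_const _).indicator hB), integral_indicator_const _ hA,
    integral_indicator_const _ hB, measureReal_def, measureReal_def, ha, hb,
    ENNReal.toReal_ofReal hp.1, ENNReal.toReal_ofReal (by linarith [hp.2]), smul_eq_mul,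
    smul_eq_mul]

theorem subgNorm_centered_bernoulli {Ω : Type*} [MeasurableSpace Ω] (μ : Measure Ω)
    [IsProbabilityMeasure μ] (ξ : Ω → ℝ) (hmeas : Measurable ξ) (p : ℝ)
    (hp : p ∈ Set.Ioo (0 : ℝ) 1) (hp2 : p ≠ 1 / 2)
    (h1 : μ {ω | ξ ω = 1 - p} = ENNReal.ofReal p)
    (h2 : μ {ω | ξ ω = -p} = ENNReal.ofReal (1 - p)) :
    subgNorm μ ξ = Real.sqrt ((1 - 2 * p) / (2 * Real.log ((1 - p) / p))) := by
  have hmgf (l : ℝ) : ∫ ω, exp (l * ξ ω) ∂μ = centeredBernoulliMGF p l :=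
    integral_comp_of_two_point hmeas (by linarith) (Ioo_subset_Icc_self hp) h1 h2
      (fun x => exp (l * x))
  have hθ := artanh_ne_zero (one_sub_two_mul_mem_Ioo hp) (by grind)
  have hlog : 2 * log ((1 - p) / p) = 4 * artanh (1 - 2 * p) := by
    rw [← exp_two_mul_artanh_one_sub_two_mul hp, log_exp]
    ring
  have hσ : √((1 - 2 * p) / (4 * artanh (1 - 2 * p))) ^ 2 =
      (1 - 2 * p) / (4 * artanh (1 - 2 * p)) :=
    sq_sqrt (by rw [div_mul_eq_div_div_swap]; exact div_nonneg (div_artanh_nonneg _) zero_le_four)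
  rw [hlog]
  refine subgNorm_eq_of_forall_le_of_eq (l₀ := 4 * artanh (1 - 2 * p)) (sqrt_nonneg _)
    (fun l => ?_) (mul_ne_zero four_ne_zero hθ) ?_ <;> rw [hmgf, hσ]
  · exact centeredBernoulliMGF_le hp hp2 l
  · exact centeredBernoulliMGF_four_mul_artanh hp hp2
end

section
/- The random variable ν with P(ν = 1) = P(ν = -1) = (1-γ)/2 and P(ν = 0) = γ, γ ∈ [0,1], is strictly subgaussian if and only if 0 ≤ γ ≤ 2/3 or γ = 1. -/
open MeasureTheory Real
open scoped Nat

/-!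
The moment generating function of `ν` is `γ + (1 - γ) cosh λ`, so with `a = 1 - γ` the question
is whether `1 - a + a cosh x ≤ exp (a x² / 2)` for all `x`. Both sides are even power series in `x`
agreeing up to order two; at order four the coefficients are `a / 24` and `a² / 8`. Hence
`0 < a < 1/3` makes the inequality fail for small `x ≠ 0`. Conversely, for `a ≥ 1/3` every
coefficient of the left side is dominated, `a / (2k)! ≤ a^k / (2^k k!)`, by
`(2k)! ≥ 3^(k-1) 2^k k!`.
-/

theorem MeasureTheory.integral_eq_sum_of_ae_mem_finset {α E : Type*} [MeasurableSpace α]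
    [MeasurableSingletonClass α] [NormedAddCommGroup E] [NormedSpace ℝ E] [CompleteSpace E]
    {ρ : Measure α} [IsFiniteMeasure ρ] {s : Finset α} (hs : ∀ᵐ x ∂ρ, x ∈ s) (f : α → E) :
    ∫ x, f x ∂ρ = ∑ x ∈ s, ρ.real {x} • f x := by
  rw [← setIntegral_finset s IntegrableOn.finset, Measure.restrict_eq_self_of_ae_mem hs]

theorem integral_exp_mul_eq_of_three_point {Ω : Type*} [MeasurableSpace Ω] {μ : Measure Ω}
    [IsProbabilityMeasure μ] {ν : Ω → ℝ} (hmeas : Measurable ν) {γ : ℝ}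
    (hγ : γ ∈ Set.Icc (0 : ℝ) 1)
    (h1 : μ {ω | ν ω = 1} = ENNReal.ofReal ((1 - γ) / 2))
    (h2 : μ {ω | ν ω = -1} = ENNReal.ofReal ((1 - γ) / 2))
    (h0 : μ {ω | ν ω = 0} = ENNReal.ofReal γ) (l : ℝ) :
    ∫ ω, exp (l * ν ω) ∂μ = γ + (1 - γ) * cosh l := by
  obtain ⟨hγ0, hγ1⟩ := hγ
  have hmap (x : ℝ) : μ.map ν {x} = μ {ω | ν ω = x} :=
    Measure.map_apply hmeas (measurableSet_singleton x)
  have := Measure.isProbabilityMeasure_map (μ := μ) hmeas.aemeasurable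
  have hsupp : ∀ᵐ x ∂μ.map ν, x ∈ ({1, -1, 0} : Finset ℝ) := by
    refine (mem_ae_iff_prob_eq_one (Finset.measurableSet ({1, -1, 0} : Finset ℝ))).2 ?_
    rw [← sum_measure_singleton, Finset.sum_insert (by norm_num), Finset.sum_pair (by norm_num),
      hmap, hmap, hmap, h1, h2, h0, ← ENNReal.ofReal_add (by linarith) hγ0,
      ← ENNReal.ofReal_add (by linarith) (by linarith)]
    convert ENNReal.ofReal_one using 2
    ring
  rw [← integral_map (f := fun x => exp (l * x)) hmeas.aemeasurable (by fun_prop),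
    integral_eq_sum_of_ae_mem_finset hsupp, Finset.sum_insert (by norm_num),
    Finset.sum_pair (by norm_num)]
  simp only [measureReal_def, hmap, h1, h2, h0, ENNReal.toReal_ofReal hγ0,
    ENNReal.toReal_ofReal (show 0 ≤ (1 - γ) / 2 by linarith), smul_eq_mul, cosh_eq, mul_one,
    mul_neg, mul_zero, exp_zero]
  ring

theorem Nat.three_pow_mul_two_pow_succ_mul_factorial_le (n : ℕ) :
    3 ^ n * (2 ^ (n + 1) * (n + 1)!) ≤ (2 * (n + 1))! := by
  induction n with
  | zero => simp
  | succ n ih =>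
    have hfact : (2 * (n + 2))! = (2 * (n + 1))! * ((2 * n + 3) * (2 * n + 4)) := by
      rw [show 2 * (n + 2) = 2 * (n + 1) + 1 + 1 by ring, Nat.factorial_succ, Nat.factorial_succ]
      ring
    calc 3 ^ (n + 1) * (2 ^ (n + 2) * (n + 2)!)
        = 3 ^ n * (2 ^ (n + 1) * (n + 1)!) * (6 * (n + 2)) := by
          rw [Nat.factorial_succ (n + 1)]; ring
      _ ≤ (2 * (n + 1))! * ((2 * n + 3) * (2 * n + 4)) :=
          Nat.mul_le_mul ih (by nlinarith)
      _ = (2 * (n + 2))! := hfact.symm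

namespace Real

theorem one_sub_add_mul_cosh_le_exp {a : ℝ} (ha : 1 / 3 ≤ a) (x : ℝ) :
    1 - a + a * cosh x ≤ exp (x ^ 2 * a / 2) := by
  have hcosh := (hasSum_nat_add_iff' 1).2 (hasSum_cosh x)
  have hexp := (hasSum_nat_add_iff' 1).2
    (exp_eq_exp_ℝ ▸ NormedSpace.expSeries_div_hasSum_exp (x ^ 2 * a / 2))
  simp only [Finset.sum_range_one, mul_zero, pow_zero, Nat.factorial_zero, Nat.cast_one,
    div_one] at hcosh hexp
  suffices a * (cosh x - 1) ≤ exp (x ^ 2 * a / 2) - 1 by linarith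
  refine hasSum_le (fun n => ?_) (hcosh.mul_left a) hexp
  have hcoeff : (2 : ℝ) ^ (n + 1) * (n + 1)! ≤ a ^ n * (2 * (n + 1))! := by
    have h3a : 1 ≤ (3 * a) ^ n := one_le_pow₀ (by linarith)
    calc (2 : ℝ) ^ (n + 1) * (n + 1)! ≤ (3 * a) ^ n * (2 ^ (n + 1) * (n + 1)!) :=
          le_mul_of_one_le_left (by positivity) h3a
      _ = a ^ n * (3 ^ n * (2 ^ (n + 1) * (n + 1)!)) := by ring
      _ ≤ a ^ n * (2 * (n + 1))! := by
          gcongr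
          exact_mod_cast Nat.three_pow_mul_two_pow_succ_mul_factorial_le n
  calc a * (x ^ (2 * (n + 1)) / (2 * (n + 1))!)
      = (x ^ 2) ^ (n + 1) * (a / (2 * (n + 1))!) := by rw [pow_mul]; ring
    _ ≤ (x ^ 2) ^ (n + 1) * (a ^ (n + 1) / (2 ^ (n + 1) * (n + 1)!)) := by
        refine mul_le_mul_of_nonneg_left ?_ (by positivity)
        rw [div_le_div_iff₀ (by positivity) (by positivity), pow_succ' a n, mul_assoc]
        exact mul_le_mul_of_nonneg_left hcoeff (by linarith)
    _ = (x ^ 2 * a / 2) ^ (n + 1) / (n + 1)! := by rw [div_pow, mul_pow]; field_simp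

theorem one_add_sq_div_two_add_pow_four_div_le_cosh (x : ℝ) :
    1 + x ^ 2 / 2 + x ^ 4 / 24 ≤ cosh x := by
  calc 1 + x ^ 2 / 2 + x ^ 4 / 24 = ∑ n ∈ Finset.range 3, x ^ (2 * n) / (2 * n)! := by
        simp [Finset.sum_range_succ, Nat.factorial]
    _ ≤ cosh x := sum_le_hasSum _ (fun n _ => by rw [pow_mul]; positivity) (hasSum_cosh x)

theorem exists_exp_lt_one_sub_add_mul_cosh {a : ℝ} (ha0 : 0 < a) (ha : a < 1 / 3) :
    ∃ x, exp (x ^ 2 * a / 2) < 1 - a + a * cosh x := by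
  -- `x² = t` makes the exponent `b = 1 - 3a`, small enough for the cubic remainder of `exp b`
  -- to stay below the gap `b² / (6a) - b² / 2` between the fourth-order terms.
  set b := 1 - 3 * a
  have hb : 0 < b := by linarith
  set t := 2 * b / a
  refine ⟨√t, ?_⟩
  have ht : √t ^ 2 = t := sq_sqrt (by positivity)
  have hcosh := one_add_sq_div_two_add_pow_four_div_le_cosh √t
  rw [show √t ^ 4 = (√t ^ 2) ^ 2 by ring, ht] at hcosh
  have hexp := exp_bound' hb.le (by linarith) (n := 3) (by norm_num)
  norm_num [Finset.sum_range_succ, Nat.factorial] at hexp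
  have hgap : 1 - a + a * (1 + t / 2 + t ^ 2 / 24) - (1 + b + b ^ 2 / 2 + b ^ 3 * 4 / 18)
      = b ^ 3 * (3 - 4 * a) / (18 * a) := by
    simp only [t, b]; field_simp; ring
  calc exp (√t ^ 2 * a / 2) = exp b := by rw [ht]; simp only [t]; field_simp
    _ ≤ 1 + b + b ^ 2 / 2 + b ^ 3 * 4 / 18 := hexp
    _ < 1 - a + a * (1 + t / 2 + t ^ 2 / 24) := by
        rw [← sub_pos, hgap]
        exact div_pos (mul_pos (pow_pos hb 3) (by linarith)) (by positivity)
    _ ≤ 1 - a + a * cosh √t := by gcongr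

end Real

theorem three_point_strictly_subgaussian_iff {Ω : Type*} [MeasurableSpace Ω] (μ : Measure Ω)
    [IsProbabilityMeasure μ] (ν : Ω → ℝ) (hmeas : Measurable ν) (γ : ℝ)
    (hγ : γ ∈ Set.Icc (0 : ℝ) 1)
    (h1 : μ {ω | ν ω = 1} = ENNReal.ofReal ((1 - γ) / 2))
    (h2 : μ {ω | ν ω = -1} = ENNReal.ofReal ((1 - γ) / 2))
    (h0 : μ {ω | ν ω = 0} = ENNReal.ofReal γ) :
    (∀ l : ℝ, ∫ ω, Real.exp (l * ν ω) ∂μ ≤ Real.exp (l ^ 2 * (1 - γ) / 2)) ↔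
      (γ ≤ 2 / 3 ∨ γ = 1) := by
  simp only [integral_exp_mul_eq_of_three_point hmeas hγ h1 h2 h0]
  constructor
  · intro hsub
    by_contra! hγ'
    obtain ⟨x, hx⟩ := exists_exp_lt_one_sub_add_mul_cosh (a := 1 - γ)
      (sub_pos.2 (lt_of_le_of_ne hγ.2 hγ'.2)) (by linarith)
    linarith [hsub x]
  · rintro (hγ' | rfl) l
    · linarith [one_sub_add_mul_cosh_le_exp (a := 1 - γ) (by linarith) l]
    · simp
end

section
/- Let η₁, η₂ be disjoint random variables (η₁η₂ = 0 a.e.), each with subgaussian norm β₁, β₂, supported on disjoint measurable sets A₁, A₂. Then for every λ ∈ ℝ, E[exp(λ(η₁+η₂))] ≤ exp(λ²β₁²/2) + exp(λ²β₂²/2) − 1. -/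
open MeasureTheory Real

theorem two_disjoint_mgf_bound {Ω : Type*} [MeasurableSpace Ω] (μ : Measure Ω)
    [IsProbabilityMeasure μ] (η₁ η₂ : Ω → ℝ) (A₁ A₂ : Set Ω)
    (hm1 : Measurable η₁) (hm2 : Measurable η₂)
    (hA1 : MeasurableSet A₁) (hA2 : MeasurableSet A₂) (hAdisj : A₁ ∩ A₂ = ∅)
    (hsupp1 : ∀ ω, ω ∉ A₁ → η₁ ω = 0) (hsupp2 : ∀ ω, ω ∉ A₂ → η₂ ω = 0)
    (β₁ β₂ : ℝ) (hβ1 : 0 ≤ β₁) (hβ2 : 0 ≤ β₂)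
    (hint1 : ∀ l : ℝ, Integrable (fun ω => Real.exp (l * η₁ ω)) μ)
    (hint2 : ∀ l : ℝ, Integrable (fun ω => Real.exp (l * η₂ ω)) μ)
    (hsub1 : ∀ l : ℝ, ∫ ω, Real.exp (l * η₁ ω) ∂μ ≤ Real.exp (l ^ 2 * β₁ ^ 2 / 2))
    (hsub2 : ∀ l : ℝ, ∫ ω, Real.exp (l * η₂ ω) ∂μ ≤ Real.exp (l ^ 2 * β₂ ^ 2 / 2)) :
    ∀ l : ℝ, ∫ ω, Real.exp (l * (η₁ ω + η₂ ω)) ∂μ ≤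
      Real.exp (l ^ 2 * β₁ ^ 2 / 2) + Real.exp (l ^ 2 * β₂ ^ 2 / 2) - 1 := by
  intro l
  have hpt : ∀ ω, Real.exp (l * (η₁ ω + η₂ ω)) =
      Real.exp (l * η₁ ω) + Real.exp (l * η₂ ω) - 1 := by
    intro ω
    by_cases h1 : ω ∈ A₁
    · have h2 : ω ∉ A₂ := fun h2 => Set.eq_empty_iff_forall_notMem.mp hAdisj ω ⟨h1, h2⟩
      rw [hsupp2 ω h2]
      simp
    · rw [hsupp1 ω h1]
      simp
  calc ∫ ω, Real.exp (l * (η₁ ω + η₂ ω)) ∂μ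
      = ∫ ω, (Real.exp (l * η₁ ω) + Real.exp (l * η₂ ω) - 1) ∂μ := by
        exact integral_congr_ae (Filter.Eventually.of_forall hpt)
    _ = (∫ ω, Real.exp (l * η₁ ω) ∂μ) + (∫ ω, Real.exp (l * η₂ ω) ∂μ) - 1 := by
        have h2 := integral_sub ((hint1 l).add (hint2 l)) (integrable_const (1:ℝ))
        have h1 := integral_add (hint1 l) (hint2 l)
        simp only [Pi.add_apply, Pi.sub_apply] at h1 h2
        rw [h2, h1, integral_const]
        simp
    _ ≤ Real.exp (l ^ 2 * β₁ ^ 2 / 2) + Real.exp (l ^ 2 * β₂ ^ 2 / 2) - 1 := by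
        have := hsub1 l; have := hsub2 l; linarith
end
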